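/- arXiv:1802.01365 — 2 statements merged into one kernel-verified Lean document; each statement's English description precedes it below -/
import Mathlib

section
/- Weak stability of the lower level problem (Lemma 3.1): Assume hypotheses (H1)–(H6). Let (αⁿ, y_δⁿ) be a sequence in [α̲,ᾱ] × Ỹ^m converging to (α, y_δ). Then every sequence (yⁿ,uⁿ) of solutions to (P_{αⁿ,y_δⁿ}) has a subsequence (y^{n_k}, u^{n_k}) converging weakly in Y × U to a solution (ȳ,ū) of (P_{α,y_δ}), and moreover Ψ_i(u^{n_k}) → Ψ_i(ū) for every 1 ≤ i ≤ r. -/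
open Filter Topology ENNReal
open scoped RealInnerProductSpace

/-- Weak convergence of a sequence in a real normed space: convergence tested against
all continuous linear functionals. -/
def WeakConv {X : Type*} [NormedAddCommGroup X] [NormedSpace ℝ X]
    (x : ℕ → X) (x₀ : X) : Prop :=
  ∀ f : X →L[ℝ] ℝ, Tendsto (fun n => f (x n)) atTop (𝓝 (f x₀))

/-- The feasible set `F_ad` of the lower level problem. -/
def Fad {Y U Z : Type*} [Zero Z] (Uad : Set U) (e : Y → U → Z) : Set (Y × U) :=
  {p | p.2 ∈ Uad ∧ e p.1 p.2 = 0}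

/-- The Tikhonov functional `J_{α,yδ}` of the lower level problem, with values in `[0,∞]`. -/
noncomputable def Jfun {Y U Ytil : Type*} [NormedAddCommGroup Y] [NormedSpace ℝ Y]
    [NormedAddCommGroup U] [NormedSpace ℝ U]
    [NormedAddCommGroup Ytil] [InnerProductSpace ℝ Ytil]
    {m r : ℕ} (ιY : Y →L[ℝ] Ytil) (Ψ : Fin r → U → ℝ≥0∞)
    (α : Fin r → ℝ) (yδ : Fin m → Ytil) (p : Y × U) : ℝ≥0∞ :=
  ENNReal.ofReal ((1 / (2 * (m : ℝ))) * ∑ j, ‖ιY p.1 - yδ j‖ ^ 2)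
    + ∑ i, ENNReal.ofReal (α i) * Ψ i p.2

/-- `p = (y,u)` solves the lower level problem `(P_{α,yδ})`. -/
def Solves {Y U Z Ytil : Type*} [NormedAddCommGroup Y] [NormedSpace ℝ Y]
    [NormedAddCommGroup U] [NormedSpace ℝ U]
    [NormedAddCommGroup Ytil] [InnerProductSpace ℝ Ytil] [Zero Z]
    {m r : ℕ} (Uad : Set U) (e : Y → U → Z) (ιY : Y →L[ℝ] Ytil)
    (Ψ : Fin r → U → ℝ≥0∞) (α : Fin r → ℝ) (yδ : Fin m → Ytil)
    (p : Y × U) : Prop :=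
  p ∈ Fad Uad e ∧ ∀ q ∈ Fad Uad e, Jfun ιY Ψ α yδ p ≤ Jfun ιY Ψ α yδ q

section Helpers

open TopologicalSpace NormedSpace

/-- Sequential Banach–Alaoglu for a separable predual. -/
lemma seq_banach_alaoglu {E : Type*} [NormedAddCommGroup E] [NormedSpace ℝ E]
    [SeparableSpace E] (f : ℕ → E →L[ℝ] ℝ) {C : ℝ} (hC : ∀ n, ‖f n‖ ≤ C) :
    ∃ φ : ℕ → ℕ, StrictMono φ ∧ ∃ g : E →L[ℝ] ℝ,
      ∀ x, Tendsto (fun n => f (φ n) x) atTop (𝓝 (g x)) := by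
  have hC0 : 0 ≤ C := le_trans (norm_nonneg _) (hC 0)
  obtain ⟨d, hd⟩ := TopologicalSpace.exists_dense_seq E
  set K : Set (ℕ → ℝ) := Set.univ.pi (fun k => Set.Icc (-(C * ‖d k‖)) (C * ‖d k‖)) with hK
  have hKc : IsCompact K := isCompact_univ_pi (fun k => isCompact_Icc)
  have hmem : ∀ n, (fun k => f n (d k)) ∈ K := by
    intro n k _
    have h1 : |f n (d k)| ≤ C * ‖d k‖ := by
      calc |f n (d k)| = ‖f n (d k)‖ := rfl
        _ ≤ ‖f n‖ * ‖d k‖ := (f n).le_opNorm _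
        _ ≤ C * ‖d k‖ := by gcongr; exact hC n
    exact ⟨(abs_le.mp h1).1, (abs_le.mp h1).2⟩
  obtain ⟨s, _, φ, hφ, hconv⟩ :=
    hKc.isSeqCompact (x := fun n => (fun k => f n (d k))) (fun n => hmem n)
  rw [tendsto_pi_nhds] at hconv
  have key : ∀ x : E, ∃ l : ℝ, Tendsto (fun n => f (φ n) x) atTop (𝓝 l) := by
    intro x
    apply cauchySeq_tendsto_of_complete
    rw [Metric.cauchySeq_iff]
    intro ε hε
    obtain ⟨k, hk⟩ : ∃ k, ‖x - d k‖ < ε / (4 * (C + 1)) := by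
      have : (0:ℝ) < ε / (4 * (C + 1)) := by positivity
      obtain ⟨k, hk⟩ := Metric.denseRange_iff.mp hd x _ this
      exact ⟨k, by simpa [dist_eq_norm, norm_sub_rev] using hk⟩
    have hck : CauchySeq (fun n => f (φ n) (d k)) := (hconv k).cauchySeq
    rw [Metric.cauchySeq_iff] at hck
    obtain ⟨N, hN⟩ := hck (ε/3) (by positivity)
    refine ⟨N, fun p hp q hq => ?_⟩
    have bnd : ∀ n, |f (φ n) x - f (φ n) (d k)| ≤ ε / 4 := by
      intro n
      have heq : |f (φ n) x - f (φ n) (d k)| = |f (φ n) (x - d k)| := by rw [map_sub]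
      rw [heq]
      calc |f (φ n) (x - d k)| ≤ ‖f (φ n)‖ * ‖x - d k‖ := (f (φ n)).le_opNorm _
        _ ≤ (C + 1) * (ε / (4 * (C + 1))) := by
            apply mul_le_mul (le_trans (hC _) (by linarith)) hk.le (norm_nonneg _) (by positivity)
        _ = ε / 4 := by field_simp
    have h3 := hN p hp q hq
    rw [Real.dist_eq] at h3 ⊢
    have hsplit : f (φ p) x - f (φ q) x =
        (f (φ p) x - f (φ p) (d k)) + (f (φ p) (d k) - f (φ q) (d k))
          + (f (φ q) (d k) - f (φ q) x) := by ring
    rw [hsplit]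
    calc |_ + _ + _| ≤ |f (φ p) x - f (φ p) (d k)| + |f (φ p) (d k) - f (φ q) (d k)|
          + |f (φ q) (d k) - f (φ q) x| :=
            (abs_add_le _ _).trans (by gcongr; exact abs_add_le _ _)
      _ ≤ ε/4 + ε/3 + ε/4 := by
          refine add_le_add (add_le_add (bnd p) h3.le) ?_
          rw [abs_sub_comm]; exact bnd q
      _ < ε := by linarith
  choose l hl using key
  have ladd : ∀ x y, l (x + y) = l x + l y := by
    intro x y
    have h2 : Tendsto (fun n => f (φ n) (x + y)) atTop (𝓝 (l x + l y)) := by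
      simpa [map_add] using (hl x).add (hl y)
    exact tendsto_nhds_unique (hl (x+y)) h2
  have lsmul : ∀ (c : ℝ) x, l (c • x) = c * l x := by
    intro c x
    have h2 : Tendsto (fun n => f (φ n) (c • x)) atTop (𝓝 (c * l x)) := by
      simpa [map_smul, smul_eq_mul] using (hl x).const_mul c
    exact tendsto_nhds_unique (hl (c • x)) h2
  have lbound : ∀ x, ‖l x‖ ≤ C * ‖x‖ := by
    intro x
    have h1 : Tendsto (fun n => |f (φ n) x|) atTop (𝓝 |l x|) := (hl x).abs
    have h2 : ∀ n, |f (φ n) x| ≤ C * ‖x‖ := fun n =>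
      le_trans ((f (φ n)).le_opNorm x) (by gcongr; exact hC _)
    exact le_of_tendsto h1 (Eventually.of_forall h2)
  exact ⟨φ, hφ, LinearMap.mkContinuous ⟨⟨l, ladd⟩, lsmul⟩ C lbound, fun x => hl x⟩

/-- A vanishing criterion: a functional bounded above on a submodule vanishes on it. -/
lemma vanish_on_submodule {X : Type*} [NormedAddCommGroup X] [NormedSpace ℝ X]
    (M : Submodule ℝ X) (f : X →L[ℝ] ℝ) (u : ℝ)
    (h : ∀ a ∈ M, f a < u) : ∀ a ∈ M, f a = 0 := by
  intro a ha
  by_contra h0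
  have key : ∀ t : ℝ, t * f a < u := by
    intro t
    have := h (t • a) (M.smul_mem t ha)
    simpa [map_smul, smul_eq_mul] using this
  rcases lt_or_gt_of_ne h0 with hneg | hpos
  · have := key ((u+1) / f a)
    rw [div_mul_cancel₀ _ (ne_of_lt hneg)] at this; linarith
  · have := key ((u+1) / f a)
    rw [div_mul_cancel₀ _ (ne_of_gt hpos)] at this; linarith

/-- A normed space whose dual is separable is itself separable. -/
lemma separable_of_dual_separable {X : Type*} [NormedAddCommGroup X] [NormedSpace ℝ X]
    [SeparableSpace (StrongDual ℝ X)] : SeparableSpace X := by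
  obtain ⟨F, hF⟩ := TopologicalSpace.exists_dense_seq (StrongDual ℝ X)
  have hx : ∀ k : ℕ, ∃ x : X, ‖x‖ ≤ 1 ∧ ‖F k‖ / 2 ≤ |F k x| := by
    intro k
    by_cases h : F k = 0
    · exact ⟨0, by simp [h]⟩
    · have hlt : ‖F k‖ / 2 < ‖F k‖ := by
        have : 0 < ‖F k‖ := norm_pos_iff.mpr h
        linarith
      obtain ⟨x, hx1, hx2⟩ := (F k).exists_lt_apply_of_lt_opNorm hlt
      exact ⟨x, hx1.le, hx2.le⟩
  choose x hx1 hx2 using hx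
  set M : Submodule ℝ X := (Submodule.span ℝ (Set.range x)).topologicalClosure with hM
  have hMsep : IsSeparable (M : Set X) :=
    ((Set.countable_range x).isSeparable.span).closure
  have hMtop : M = ⊤ := by
    by_contra hne
    obtain ⟨z, hz⟩ : ∃ z : X, z ∉ M := by
      by_contra h
      push_neg at h
      exact hne (Submodule.eq_top_iff'.mpr h)
    have hMclosed : IsClosed (M : Set X) := Submodule.isClosed_topologicalClosure _
    obtain ⟨f, u, hfu, huz⟩ := geometric_hahn_banach_closed_point
      (Submodule.convex M) hMclosed hz
    have hf0 := vanish_on_submodule M f u hfu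
    have hu0 : 0 < u := by simpa using hfu 0 M.zero_mem
    have hfz : 0 < f z := lt_trans hu0 huz
    have hfne : f ≠ 0 := by
      intro h
      rw [h] at hfz
      simp at hfz
    have hfnorm : 0 < ‖f‖ := norm_pos_iff.mpr hfne
    set g : StrongDual ℝ X := ‖f‖⁻¹ • f with hg
    have hgnorm : ‖g‖ = 1 := by
      rw [hg, norm_smul, norm_inv, norm_norm, inv_mul_cancel₀ (ne_of_gt hfnorm)]
    have hg0 : ∀ k, g (x k) = 0 := by
      intro k
      have hkM : x k ∈ M :=
        (Submodule.span ℝ (Set.range x)).le_topologicalClosure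
          (Submodule.subset_span ⟨k, rfl⟩)
      simp [hg, hf0 _ hkM]
    obtain ⟨k, hk⟩ := Metric.denseRange_iff.mp hF g (1/4) (by norm_num)
    have hFk : 3/4 ≤ ‖F k‖ := by
      have h1 : ‖g - F k‖ < 1/4 := by rwa [← dist_eq_norm]
      have h2 : ‖g‖ - ‖F k‖ ≤ ‖g - F k‖ := norm_sub_norm_le _ _
      rw [hgnorm] at h2
      linarith
    have habs : |F k (x k)| ≤ 1/4 := by
      have h1 : F k (x k) = F k (x k) - g (x k) := by rw [hg0]; ring
      rw [h1]
      have h2 : |F k (x k) - g (x k)| = |(F k - g) (x k)| := by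
        simp [ContinuousLinearMap.sub_apply]
      rw [h2]
      calc |(F k - g) (x k)| ≤ ‖F k - g‖ * ‖x k‖ := (F k - g).le_opNorm _
        _ ≤ ‖F k - g‖ * 1 := by gcongr; exact hx1 k
        _ ≤ 1/4 := by
            rw [mul_one, norm_sub_rev, ← dist_eq_norm]
            exact hk.le
    have := hx2 k
    linarith
  have huniv : IsSeparable (Set.univ : Set X) := by
    have h1 : (M : Set X) = Set.univ := by rw [hMtop]; rfl
    rw [← h1]
    exact hMsep
  exact (isSeparable_univ_iff).mp huniv

/-- The restriction map from the dual of `X` to the dual of a subspace. -/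
noncomputable def restrictDual {X : Type*} [NormedAddCommGroup X] [NormedSpace ℝ X]
    (M : Submodule ℝ X) : StrongDual ℝ X →L[ℝ] StrongDual ℝ M :=
  LinearMap.mkContinuous
    { toFun := fun (f : StrongDual ℝ X) => f.comp M.subtypeL
      map_add' := fun f g => by ext z; simp
      map_smul' := fun c f => by ext z; simp }
    1
    (fun f => by
      simp only [LinearMap.coe_mk, AddHom.coe_mk, one_mul]
      apply ContinuousLinearMap.opNorm_le_bound _ (norm_nonneg f)
      intro z
      calc ‖f (M.subtypeL z)‖ ≤ ‖f‖ * ‖M.subtypeL z‖ := f.le_opNorm _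
        _ = ‖f‖ * ‖z‖ := by simp)

@[simp] lemma restrictDual_apply {X : Type*} [NormedAddCommGroup X] [NormedSpace ℝ X]
    (M : Submodule ℝ X) (f : StrongDual ℝ X) (z : M) :
    restrictDual M f z = f z := rfl

/-- A closed subspace of a reflexive space is reflexive. -/
lemma reflexive_closed_submodule {X : Type*} [NormedAddCommGroup X] [NormedSpace ℝ X]
    (hrefl : Function.Surjective (inclusionInDoubleDual ℝ X))
    (M : Submodule ℝ X) (hMc : IsClosed (M : Set X)) :
    Function.Surjective (inclusionInDoubleDual ℝ ↥M) := by
  intro F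
  set Ft : StrongDual ℝ (StrongDual ℝ X) := F.comp (restrictDual M) with hFt
  obtain ⟨z, hz⟩ := hrefl Ft
  have hzM : z ∈ M := by
    by_contra hzm
    obtain ⟨f, u, hfu, huz⟩ := geometric_hahn_banach_closed_point (Submodule.convex M) hMc hzm
    have hf0 := vanish_on_submodule M f u hfu
    have hu0 : 0 < u := by simpa using hfu 0 M.zero_mem
    have h1 : Ft f = f z := by rw [← hz]; rfl
    have h2 : restrictDual M f = 0 := by
      ext w; simpa using hf0 w w.2
    have h3 : Ft f = 0 := by rw [hFt]; simp [ContinuousLinearMap.comp_apply, h2]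
    rw [h3] at h1
    have : 0 < f z := lt_trans hu0 huz
    linarith [this, h1.symm]
  refine ⟨⟨z, hzM⟩, ?_⟩
  ext g
  obtain ⟨gt, hgt, _⟩ := exists_extension_norm_eq M g
  have h1 : restrictDual M gt = g := by ext w; simpa using hgt w
  calc inclusionInDoubleDual ℝ ↥M ⟨z, hzM⟩ g = g ⟨z, hzM⟩ := rfl
    _ = gt z := (hgt ⟨z, hzM⟩).symm
    _ = Ft gt := by rw [← hz]; rfl
    _ = F (restrictDual M gt) := rfl
    _ = F g := by rw [h1]

/-- Bounded sequences in a reflexive space have weakly convergent subsequences. -/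
lemma exists_weak_subseq {X : Type*} [NormedAddCommGroup X] [NormedSpace ℝ X]
    (hrefl : Function.Surjective (inclusionInDoubleDual ℝ X))
    (x : ℕ → X) {C : ℝ} (hx : ∀ n, ‖x n‖ ≤ C) :
    ∃ φ : ℕ → ℕ, StrictMono φ ∧ ∃ xb : X, WeakConv (fun n => x (φ n)) xb := by
  set M : Submodule ℝ X := (Submodule.span ℝ (Set.range x)).topologicalClosure with hM
  have hMc : IsClosed (M : Set X) := Submodule.isClosed_topologicalClosure _
  have hxM : ∀ n, x n ∈ M :=
    fun n => (Submodule.span ℝ (Set.range x)).le_topologicalClosure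
      (Submodule.subset_span ⟨n, rfl⟩)
  have hMrefl : Function.Surjective (inclusionInDoubleDual ℝ ↥M) :=
    reflexive_closed_submodule hrefl M hMc
  haveI hMsep : SeparableSpace ↥M := by
    have h1 : IsSeparable (M : Set X) := ((Set.countable_range x).isSeparable.span).closure
    exact h1.separableSpace
  haveI : SeparableSpace (StrongDual ℝ (StrongDual ℝ ↥M)) := by
    have hcont : Continuous (inclusionInDoubleDual ℝ ↥M) :=
      (inclusionInDoubleDual ℝ ↥M).continuous
    exact hMrefl.denseRange.separableSpace hcont
  haveI : SeparableSpace (StrongDual ℝ ↥M) := separable_of_dual_separable (X := StrongDual ℝ ↥M)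
  letI : NormedAddCommGroup (StrongDual ℝ ↥M) := inferInstance
  letI : NormedSpace ℝ (StrongDual ℝ ↥M) := inferInstance
  set F : ℕ → StrongDual ℝ (StrongDual ℝ ↥M) :=
    fun n => inclusionInDoubleDual ℝ ↥M ⟨x n, hxM n⟩ with hF
  have hFC : ∀ n, ‖F n‖ ≤ C := by
    intro n
    calc ‖F n‖ ≤ ‖(⟨x n, hxM n⟩ : ↥M)‖ := double_dual_bound ℝ ↥M _
      _ = ‖x n‖ := rfl
      _ ≤ C := hx n
  obtain ⟨φ, hφ, g, hg⟩ := seq_banach_alaoglu F hFC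
  obtain ⟨xbM, hxbM⟩ := hMrefl g
  refine ⟨φ, hφ, (xbM : X), ?_⟩
  intro f
  have key : ∀ n, f (x (φ n)) = F (φ n) (restrictDual M f) := by
    intro n; simp [hF]
  have key2 : f (xbM : X) = g (restrictDual M f) := by
    rw [← hxbM]; simp
  rw [key2]
  simpa only [key] using hg (restrictDual M f)

/-- A weak limit of a sequence in a closed convex set lies in that set. -/
lemma mem_of_weakConv {X : Type*} [NormedAddCommGroup X] [NormedSpace ℝ X]
    {s : Set X} (hconv : Convex ℝ s) (hcl : IsClosed s)
    {x : ℕ → X} {x₀ : X} (hx : ∀ n, x n ∈ s) (hw : WeakConv x x₀) : x₀ ∈ s := by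
  by_contra h
  obtain ⟨f, u, hfu, hux⟩ := geometric_hahn_banach_closed_point hconv hcl h
  have h1 : f x₀ ≤ u :=
    le_of_tendsto (hw f) (Eventually.of_forall (fun n => (hfu _ (hx n)).le))
  linarith

/-- Weak convergence in a product from weak convergence of the components. -/
lemma weakConv_prod {Y U : Type*} [NormedAddCommGroup Y] [NormedSpace ℝ Y]
    [NormedAddCommGroup U] [NormedSpace ℝ U]
    {y : ℕ → Y} {u : ℕ → U} {yb : Y} {ub : U}
    (hy : WeakConv y yb) (hu : WeakConv u ub) :
    WeakConv (fun n => (y n, u n)) (yb, ub) := by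
  intro f
  have key : ∀ (a : Y) (b : U), f (a, b) =
      f.comp (ContinuousLinearMap.inl ℝ Y U) a + f.comp (ContinuousLinearMap.inr ℝ Y U) b := by
    intro a b
    rw [ContinuousLinearMap.comp_apply, ContinuousLinearMap.comp_apply,
      ContinuousLinearMap.inl_apply, ContinuousLinearMap.inr_apply, ← map_add]
    norm_num
  simp only [key]
  exact (hy _).add (hu _)

/-- Cancellation for sums in `ℝ≥0∞`. -/
lemma ennreal_sum_cancel {ι : Type*} [Fintype ι] [DecidableEq ι] (f g : ι → ℝ≥0∞)
    (hle : ∀ i, f i ≤ g i) (hsum : ∑ i, g i ≤ ∑ i, f i) (hfin : ∑ i, g i ≠ ⊤) :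
    ∀ i, f i = g i := by
  intro i
  refine le_antisymm (hle i) ?_
  have h1 : ∑ j, f j ≤ ∑ j, g j := Finset.sum_le_sum (fun j _ => hle j)
  have heq : ∑ j, f j = ∑ j, g j := le_antisymm h1 hsum
  have h2 : f i + ∑ j ∈ Finset.univ.erase i, f j = ∑ j, f j :=
    Finset.add_sum_erase _ _ (Finset.mem_univ i)
  have h3 : g i + ∑ j ∈ Finset.univ.erase i, g j = ∑ j, g j :=
    Finset.add_sum_erase _ _ (Finset.mem_univ i)
  have h4 : ∑ j ∈ Finset.univ.erase i, f j ≤ ∑ j ∈ Finset.univ.erase i, g j :=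
    Finset.sum_le_sum (fun j _ => hle j)
  have h5 : g i + ∑ j ∈ Finset.univ.erase i, g j ≤ f i + ∑ j ∈ Finset.univ.erase i, g j := by
    calc g i + ∑ j ∈ Finset.univ.erase i, g j = ∑ j, g j := h3
      _ = ∑ j, f j := heq.symm
      _ = f i + ∑ j ∈ Finset.univ.erase i, f j := h2.symm
      _ ≤ f i + ∑ j ∈ Finset.univ.erase i, g j := by gcongr
  have hR : ∑ j ∈ Finset.univ.erase i, g j ≠ ⊤ := by
    intro h
    apply hfin
    rw [← h3, h]
    simp
  exact (WithTop.add_le_add_iff_right hR).mp h5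

end Helpers

variable {Y U Util Ytil Z : Type*}
  [NormedAddCommGroup Y] [NormedSpace ℝ Y] [CompleteSpace Y]
  [NormedAddCommGroup U] [NormedSpace ℝ U] [CompleteSpace U]
  [NormedAddCommGroup Util] [InnerProductSpace ℝ Util] [CompleteSpace Util]
  [NormedAddCommGroup Ytil] [InnerProductSpace ℝ Ytil] [CompleteSpace Ytil]
  [NormedAddCommGroup Z] [NormedSpace ℝ Z] [CompleteSpace Z]

/-- **Lemma 3.1** (weak stability of the lower level problem): under (H1)–(H6), if
`(αⁿ, yδⁿ) → (α, yδ)`, then every sequence `(yⁿ,uⁿ)` of solutions to `(P_{αⁿ,yδⁿ})`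
has a subsequence converging weakly in `Y × U` to a solution `(ȳ,ū)` of `(P_{α,yδ})`,
and along this subsequence `Ψᵢ(u^{n_k}) → Ψᵢ(ū)` for every `i`. -/
theorem weak_stability_lower_level
    (hYrefl : Function.Surjective (NormedSpace.inclusionInDoubleDual ℝ Y))
    (hUrefl : Function.Surjective (NormedSpace.inclusionInDoubleDual ℝ U))
    {m r : ℕ} (hm : 0 < m) (hr : 0 < r)
    (ιY : Y →L[ℝ] Ytil) (hιY : Function.Injective ιY)
    (Uad : Set U) (e : Y → U → Z) (Ψ : Fin r → U → ℝ≥0∞)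
    (αlo αhi : Fin r → ℝ) (hαpos : ∀ i, 0 < αlo i) (hαle : ∀ i, αlo i ≤ αhi i)
    (hH1 : Convex ℝ Uad ∧ IsClosed Uad)
    (hH2 : (Fad Uad e).Nonempty)
    (hH3 : ∀ (y : ℕ → Y) (u : ℕ → U) (ybar : Y) (ubar : U),
      (∀ n, u n ∈ Uad) → ubar ∈ Uad → (∀ n, e (y n) (u n) = 0) →
      WeakConv (fun n => (y n, u n)) (ybar, ubar) → e ybar ubar = 0)
    (hH4 : ∀ (y : ℕ → Y) (u : ℕ → U), (∀ n, (y n, u n) ∈ Fad Uad e) →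
      (∃ C : ℝ, ∀ n, ‖u n‖ ≤ C) → ∃ C : ℝ, ∀ n, ‖y n‖ ≤ C)
    (hH5coer : ∀ u : ℕ → U, Tendsto (fun n => ‖u n‖) atTop atTop →
      Tendsto (fun n => ∑ i, Ψ i (u n)) atTop (𝓝 (⊤ : ℝ≥0∞)))
    (hH5prop : ∃ p ∈ Fad Uad e, ∑ i, Ψ i p.2 ≠ ⊤)
    (hH6 : ∀ (i : Fin r) (u : ℕ → U) (ubar : U), WeakConv u ubar →
      Ψ i ubar ≤ Filter.liminf (fun n => Ψ i (u n)) atTop)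
    (αseq : ℕ → Fin r → ℝ) (hαseq : ∀ n i, αlo i ≤ αseq n i ∧ αseq n i ≤ αhi i)
    (α : Fin r → ℝ) (hα : ∀ i, αlo i ≤ α i ∧ α i ≤ αhi i)
    (hαconv : ∀ i, Tendsto (fun n => αseq n i) atTop (𝓝 (α i)))
    (yδseq : ℕ → Fin m → Ytil) (yδ : Fin m → Ytil)
    (hyδconv : ∀ j, Tendsto (fun n => yδseq n j) atTop (𝓝 (yδ j)))
    (y : ℕ → Y) (u : ℕ → U)
    (hsol : ∀ n, Solves Uad e ιY Ψ (αseq n) (yδseq n) (y n, u n))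
    :
    ∃ φ : ℕ → ℕ, StrictMono φ ∧ ∃ p : Y × U,
      WeakConv (fun k => (y (φ k), u (φ k))) p ∧
      Solves Uad e ιY Ψ α yδ p ∧
      ∀ i, Tendsto (fun k => Ψ i (u (φ k))) atTop (𝓝 (Ψ i p.2)) := by
  classical
  have hfeas : ∀ n, (y n, u n) ∈ Fad Uad e := fun n => (hsol n).1
  obtain ⟨p₀, hp₀F, hp₀fin⟩ := hH5prop
  -- real fidelity function
  set fid : (Fin m → Ytil) → Y → ℝ :=
    fun yd w => (1 / (2 * (m : ℝ))) * ∑ j, ‖ιY w - yd j‖ ^ 2 with hfiddef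
  have hJdef : ∀ (a : Fin r → ℝ) (yd : Fin m → Ytil) (p : Y × U),
      Jfun ιY Ψ a yd p
        = ENNReal.ofReal (fid yd p.1) + ∑ i, ENNReal.ofReal (a i) * Ψ i p.2 :=
    fun _ _ _ => rfl
  -- convergence of the fidelity term of a fixed point
  have hfidtend : ∀ (w : Y) (ψ : ℕ → ℕ), Tendsto ψ atTop atTop →
      Tendsto (fun n => fid (yδseq (ψ n)) w) atTop (𝓝 (fid yδ w)) := by
    intro w ψ hψ
    apply Filter.Tendsto.const_mul
    apply tendsto_finset_sum
    intro j _
    exact ((tendsto_const_nhds.sub ((hyδconv j).comp hψ)).norm.pow 2)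
  -- uniform bound on the optimal values
  obtain ⟨Cf, hCf⟩ := (hfidtend p₀.1 id tendsto_id).bddAbove_range
  set K : ℝ≥0∞ := ENNReal.ofReal Cf + ∑ i, ENNReal.ofReal (αhi i) * Ψ i p₀.2 with hKdef
  have hΨp₀ : ∀ i, Ψ i p₀.2 ≠ ⊤ := by
    intro i h
    exact hp₀fin (ENNReal.sum_eq_top.mpr ⟨i, Finset.mem_univ i, h⟩)
  have hKfin : K ≠ ⊤ := by
    rw [hKdef]
    refine ENNReal.add_ne_top.mpr ⟨ENNReal.ofReal_ne_top, ?_⟩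
    rw [Ne, ENNReal.sum_eq_top]
    rintro ⟨i, -, h⟩
    exact (ENNReal.mul_ne_top ENNReal.ofReal_ne_top (hΨp₀ i)) h
  have hJK : ∀ n, Jfun ιY Ψ (αseq n) (yδseq n) (y n, u n) ≤ K := by
    intro n
    refine le_trans ((hsol n).2 p₀ hp₀F) ?_
    rw [hJdef, hKdef]
    refine add_le_add (ENNReal.ofReal_le_ofReal (hCf (Set.mem_range_self n)))
      (Finset.sum_le_sum fun i _ => ?_)
    exact mul_le_mul_left (ENNReal.ofReal_le_ofReal (hαseq n i).2) _
  -- bound on the regularizers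
  have hαlo0 : ∀ i, ENNReal.ofReal (αlo i) ≠ 0 := by
    intro i
    simp [ENNReal.ofReal_eq_zero, not_le, hαpos i]
  have hmono : ∀ n i, ENNReal.ofReal (αlo i) * Ψ i (u n) ≤ K := by
    intro n i
    have h1 : ENNReal.ofReal (αseq n i) * Ψ i (u n)
        ≤ Jfun ιY Ψ (αseq n) (yδseq n) (y n, u n) := by
      rw [hJdef]
      refine le_trans (Finset.single_le_sum (f := fun i => ENNReal.ofReal (αseq n i) * Ψ i (u n))
        (fun i _ => zero_le) (Finset.mem_univ i)) ?_
      exact le_add_self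
    exact le_trans (mul_le_mul_left (ENNReal.ofReal_le_ofReal (hαseq n i).1) _)
      (h1.trans (hJK n))
  have hΨbd : ∀ n i, Ψ i (u n) ≤ (ENNReal.ofReal (αlo i))⁻¹ * K := by
    intro n i
    calc Ψ i (u n)
        = (ENNReal.ofReal (αlo i))⁻¹ * (ENNReal.ofReal (αlo i) * Ψ i (u n)) := by
          rw [← mul_assoc, ENNReal.inv_mul_cancel (hαlo0 i) ENNReal.ofReal_ne_top, one_mul]
      _ ≤ _ := mul_le_mul_right (hmono n i) _
  set B : ℝ≥0∞ := ∑ i, (ENNReal.ofReal (αlo i))⁻¹ * K with hBdef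
  have hB : ∀ n, ∑ i, Ψ i (u n) ≤ B := fun n => Finset.sum_le_sum (fun i _ => hΨbd n i)
  have hBfin : B ≠ ⊤ := by
    rw [hBdef, Ne, ENNReal.sum_eq_top]
    rintro ⟨i, -, h⟩
    exact (ENNReal.mul_ne_top (ENNReal.inv_ne_top.mpr (hαlo0 i)) hKfin) h
  -- boundedness of u
  have hub : ∃ C, ∀ n, ‖u n‖ ≤ C := by
    by_contra hc
    push_neg at hc
    have h' : ∀ k : ℕ, ∃ n, (k : ℝ) < ‖u n‖ := fun k => hc k
    choose ψ hψ using h'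
    have hten : Tendsto (fun k => ‖u (ψ k)‖) atTop atTop :=
      tendsto_atTop_mono (fun k => (hψ k).le) tendsto_natCast_atTop_atTop
    have h2 := hH5coer (fun k => u (ψ k)) hten
    have h3 : ∀ᶠ k in atTop, B < ∑ i, Ψ i (u (ψ k)) := by
      have hmem : Set.Ioi B ∈ 𝓝 (⊤ : ℝ≥0∞) :=
        isOpen_Ioi.mem_nhds (lt_top_iff_ne_top.mpr hBfin)
      exact h2.eventually_mem hmem
    obtain ⟨k, hk⟩ := h3.exists
    exact absurd (hB (ψ k)) (not_le.mpr hk)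
  obtain ⟨Cu, hCu⟩ := hub
  obtain ⟨Cy, hCy⟩ := hH4 y u hfeas ⟨Cu, hCu⟩
  -- weak subsequence extraction
  obtain ⟨φ₁, hφ₁, ub, hub1⟩ := exists_weak_subseq hUrefl u hCu
  obtain ⟨φ₂, hφ₂, yb, hyb⟩ := exists_weak_subseq hYrefl (fun n => y (φ₁ n)) (fun n => hCy _)
  -- uniform bound on the data
  obtain ⟨Dδ, hDδ⟩ : ∃ Dδ : ℝ, ∀ n j, ‖yδseq n j‖ ≤ Dδ := by
    have hb : ∀ j, ∃ c, ∀ n, ‖yδseq n j‖ ≤ c := by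
      intro j
      obtain ⟨c, hc⟩ := ((hyδconv j).norm).bddAbove_range
      exact ⟨c, fun n => hc (Set.mem_range_self n)⟩
    choose c hc using hb
    refine ⟨∑ j, |c j|, fun n j => le_trans (hc j n) ?_⟩
    calc c j ≤ |c j| := le_abs_self _
      _ ≤ ∑ j', |c j'| := Finset.single_le_sum (f := fun j' => |c j'|)
          (fun _ _ => abs_nonneg _) (Finset.mem_univ j)
  set D : ℝ := ‖ιY‖ * Cy + Dδ with hDdef
  have hnormbd : ∀ n j, ‖ιY (y n) - yδseq n j‖ ≤ D := by
    intro n j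
    calc ‖ιY (y n) - yδseq n j‖ ≤ ‖ιY (y n)‖ + ‖yδseq n j‖ := norm_sub_le _ _
      _ ≤ ‖ιY‖ * Cy + Dδ := by
          refine add_le_add (le_trans (ιY.le_opNorm _) ?_) (hDδ n j)
          exact mul_le_mul_of_nonneg_left (hCy n) (norm_nonneg _)
  -- extraction of limits of the auxiliary quantities
  set G : ℕ → (Fin r → ℝ≥0∞) × (Fin m → ℝ) := fun k =>
    (fun i => Ψ i (u (φ₁ (φ₂ k))), fun j => ‖ιY (y (φ₁ (φ₂ k))) - yδseq (φ₁ (φ₂ k)) j‖)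
    with hGdef
  set S : Set ((Fin r → ℝ≥0∞) × (Fin m → ℝ)) :=
    Set.univ ×ˢ (Set.univ.pi fun _ => Set.Icc 0 D) with hSdef
  have hScomp : IsCompact S := isCompact_univ.prod (isCompact_univ_pi fun _ => isCompact_Icc)
  have hGmem : ∀ k, G k ∈ S := fun k => ⟨trivial, fun j _ => ⟨norm_nonneg _, hnormbd _ _⟩⟩
  obtain ⟨⟨l, τ⟩, hltS, φ₃, hφ₃, hGconv⟩ := hScomp.tendsto_subseq hGmem
  have hl : ∀ i, Tendsto (fun k => Ψ i (u (φ₁ (φ₂ (φ₃ k))))) atTop (𝓝 (l i)) := by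
    intro i
    have h1 : Tendsto (fun k => (G (φ₃ k)).1) atTop (𝓝 l) :=
      (continuous_fst.tendsto _).comp hGconv
    exact tendsto_pi_nhds.mp h1 i
  have hτ : ∀ j, Tendsto
      (fun k => ‖ιY (y (φ₁ (φ₂ (φ₃ k)))) - yδseq (φ₁ (φ₂ (φ₃ k))) j‖) atTop (𝓝 (τ j)) := by
    intro j
    have h1 : Tendsto (fun k => (G (φ₃ k)).2) atTop (𝓝 τ) :=
      (continuous_snd.tendsto _).comp hGconv
    exact tendsto_pi_nhds.mp h1 j
  have hτnn : ∀ j, 0 ≤ τ j := fun j => (hltS.2 j trivial).1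
  -- the final subsequence
  set φ : ℕ → ℕ := fun k => φ₁ (φ₂ (φ₃ k)) with hφdef
  have hφmono : StrictMono φ := hφ₁.comp (hφ₂.comp hφ₃)
  have hφtend : Tendsto φ atTop atTop := hφmono.tendsto_atTop
  have h23 : Tendsto (fun k => φ₂ (φ₃ k)) atTop atTop := (hφ₂.comp hφ₃).tendsto_atTop
  have huw : WeakConv (fun k => u (φ k)) ub := fun f => (hub1 f).comp h23
  have hyw : WeakConv (fun k => y (φ k)) yb := fun f => (hyb f).comp hφ₃.tendsto_atTop
  have hpw : WeakConv (fun k => (y (φ k), u (φ k))) (yb, ub) := weakConv_prod hyw huw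
  -- feasibility of the limit point
  have hubUad : ub ∈ Uad := mem_of_weakConv hH1.1 hH1.2 (fun k => (hfeas (φ k)).1) huw
  have hey : e yb ub = 0 := hH3 (fun k => y (φ k)) (fun k => u (φ k)) yb ub
    (fun k => (hfeas (φ k)).1) hubUad (fun k => (hfeas (φ k)).2) hpw
  have hpF : (yb, ub) ∈ Fad Uad e := ⟨hubUad, hey⟩
  -- limit of the optimal values
  have hakt : Tendsto (fun k => fid (yδseq (φ k)) (y (φ k))) atTop
      (𝓝 ((1 / (2 * (m : ℝ))) * ∑ j, (τ j) ^ 2)) := by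
    apply Filter.Tendsto.const_mul
    apply tendsto_finset_sum
    intro j _
    exact (hτ j).pow 2
  set astar : ℝ≥0∞ := ENNReal.ofReal ((1 / (2 * (m : ℝ))) * ∑ j, (τ j) ^ 2) with hastar
  have hat : Tendsto (fun k => ENNReal.ofReal (fid (yδseq (φ k)) (y (φ k)))) atTop (𝓝 astar) :=
    ENNReal.tendsto_ofReal hakt
  have hαne0 : ∀ i, ENNReal.ofReal (α i) ≠ 0 := by
    intro i
    have : 0 < α i := lt_of_lt_of_le (hαpos i) (hα i).1
    simp [ENNReal.ofReal_eq_zero, not_le, this]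
  have hofα : ∀ i, Tendsto (fun k => ENNReal.ofReal (αseq (φ k) i)) atTop
      (𝓝 (ENNReal.ofReal (α i))) := fun i => ENNReal.tendsto_ofReal ((hαconv i).comp hφtend)
  have hterm : ∀ i, Tendsto (fun k => ENNReal.ofReal (αseq (φ k) i) * Ψ i (u (φ k))) atTop
      (𝓝 (ENNReal.ofReal (α i) * l i)) := fun i =>
    ENNReal.Tendsto.mul (hofα i) (Or.inl (hαne0 i)) (hl i) (Or.inr ENNReal.ofReal_ne_top)
  set T : ℝ≥0∞ := astar + ∑ i, ENNReal.ofReal (α i) * l i with hTdef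
  have hJt : Tendsto (fun k => Jfun ιY Ψ (αseq (φ k)) (yδseq (φ k)) (y (φ k), u (φ k)))
      atTop (𝓝 T) := by
    simp only [hJdef]
    exact hat.add (tendsto_finset_sum _ (fun i _ => hterm i))
  -- limit of the objective at a fixed point
  have hJq : ∀ q : Y × U, Tendsto (fun k => Jfun ιY Ψ (αseq (φ k)) (yδseq (φ k)) q)
      atTop (𝓝 (Jfun ιY Ψ α yδ q)) := by
    intro q
    simp only [hJdef]
    exact (ENNReal.tendsto_ofReal (hfidtend q.1 φ hφtend)).add
      (tendsto_finset_sum _ (fun i _ =>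
        ENNReal.Tendsto.mul_const (hofα i) (Or.inl (hαne0 i))))
  have hTle : ∀ q ∈ Fad Uad e, T ≤ Jfun ιY Ψ α yδ q := by
    intro q hq
    exact le_of_tendsto_of_tendsto' hJt (hJq q) (fun k => (hsol (φ k)).2 q hq)
  -- weak lower semicontinuity
  have hLle : ∀ i, Ψ i ub ≤ l i := by
    intro i
    have h1 := hH6 i (fun k => u (φ k)) ub huw
    rwa [(hl i).liminf_eq] at h1
  have hfidle : fid yδ yb ≤ (1 / (2 * (m : ℝ))) * ∑ j, (τ j) ^ 2 := by
    have h2m : (0:ℝ) ≤ 1 / (2 * (m : ℝ)) := by positivity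
    refine mul_le_mul_of_nonneg_left (Finset.sum_le_sum fun j _ => ?_) h2m
    have hz : ‖ιY yb - yδ j‖ ≤ τ j := by
      set z : Ytil := ιY yb - yδ j with hzdef
      have hzk : Tendsto (fun k => ⟪z, ιY (y (φ k)) - yδseq (φ k) j⟫) atTop (𝓝 ⟪z, z⟫) := by
        have h1 : Tendsto (fun k => ⟪z, ιY (y (φ k))⟫) atTop (𝓝 ⟪z, ιY yb⟫) := by
          have h0 := hyw ((innerSL ℝ z).comp ιY)
          simpa using h0
        have h2 : Tendsto (fun k => ⟪z, yδseq (φ k) j⟫) atTop (𝓝 ⟪z, yδ j⟫) :=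
          tendsto_const_nhds.inner ((hyδconv j).comp hφtend)
        have h3 := h1.sub h2
        rw [show ⟪z, z⟫ = ⟪z, ιY yb⟫ - ⟪z, yδ j⟫ by nth_rewrite 2 [hzdef]; exact inner_sub_right _ _ _]
        simpa only [inner_sub_right] using h3
      have hub2 : ∀ k, ⟪z, ιY (y (φ k)) - yδseq (φ k) j⟫
          ≤ ‖z‖ * ‖ιY (y (φ k)) - yδseq (φ k) j‖ := fun k => real_inner_le_norm _ _
      have hlim2 : Tendsto (fun k => ‖z‖ * ‖ιY (y (φ k)) - yδseq (φ k) j‖) atTop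
          (𝓝 (‖z‖ * τ j)) := (hτ j).const_mul _
      have key : ⟪z, z⟫ ≤ ‖z‖ * τ j := le_of_tendsto_of_tendsto' hzk hlim2 hub2
      rw [real_inner_self_eq_norm_sq] at key
      rcases eq_or_lt_of_le (norm_nonneg z) with h0 | h0
      · rw [← h0]; exact hτnn j
      · nlinarith [key, h0]
    exact pow_le_pow_left₀ (norm_nonneg _) hz 2
  have hDle : Jfun ιY Ψ α yδ (yb, ub) ≤ T := by
    rw [hJdef, hTdef, hastar]
    exact add_le_add (ENNReal.ofReal_le_ofReal hfidle)
      (Finset.sum_le_sum fun i _ => mul_le_mul_right (hLle i) _)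
  have hsolves : Solves Uad e ιY Ψ α yδ (yb, ub) :=
    ⟨hpF, fun q hq => le_trans hDle (hTle q hq)⟩
  -- T is finite
  have hTfin : T ≠ ⊤ := by
    have h1 : T ≤ Jfun ιY Ψ α yδ p₀ := hTle p₀ hp₀F
    have h2 : Jfun ιY Ψ α yδ p₀ ≠ ⊤ := by
      rw [hJdef]
      refine ENNReal.add_ne_top.mpr ⟨ENNReal.ofReal_ne_top, ?_⟩
      rw [Ne, ENNReal.sum_eq_top]
      rintro ⟨i, -, h⟩
      exact (ENNReal.mul_ne_top ENNReal.ofReal_ne_top (hΨp₀ i)) h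
    exact ne_top_of_le_ne_top h2 h1
  -- componentwise identification of the limits
  have hΨeq : ∀ i, Ψ i ub = l i := by
    have hle : ∀ o : Option (Fin r),
        (Option.elim o (ENNReal.ofReal (fid yδ yb)) (fun i => ENNReal.ofReal (α i) * Ψ i ub))
          ≤ (Option.elim o astar (fun i => ENNReal.ofReal (α i) * l i)) := by
      rintro (_ | i)
      · exact ENNReal.ofReal_le_ofReal hfidle
      · exact mul_le_mul_right (hLle i) _
    have hsumf : ∑ o : Option (Fin r),
        Option.elim o (ENNReal.ofReal (fid yδ yb)) (fun i => ENNReal.ofReal (α i) * Ψ i ub)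
          = Jfun ιY Ψ α yδ (yb, ub) := by
      rw [Fintype.sum_option, hJdef]
      simp
    have hsumg : ∑ o : Option (Fin r),
        Option.elim o astar (fun i => ENNReal.ofReal (α i) * l i) = T := by
      rw [Fintype.sum_option, hTdef]
      simp
    have hcomp := ennreal_sum_cancel _ _ hle
      (by rw [hsumf, hsumg]; exact hTle _ hpF) (by rw [hsumg]; exact hTfin)
    intro i
    have h1 := hcomp (some i)
    simp only [Option.elim] at h1
    exact (ENNReal.mul_right_inj (hαne0 i) ENNReal.ofReal_ne_top).mp h1
  refine ⟨φ, hφmono, (yb, ub), hpw, hsolves, fun i => ?_⟩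
  have h2 : Ψ i (yb, ub).2 = l i := hΨeq i
  rw [h2]
  exact hl i
end

section
/- Convergence of optimal values (Step 2 in the proof of Lemma 3.1): Assume hypotheses (H1)–(H6). Let (αⁿ, y_δⁿ) be a sequence in [α̲,ᾱ] × Ỹ^m converging to (α, y_δ), and for each n let (yⁿ,uⁿ) be a solution of (P_{αⁿ,y_δⁿ}). If (yⁿ,uⁿ) converges weakly in Y × U to some (ȳ,ū) ∈ F_ad, then (ȳ,ū) solves (P_{α,y_δ}) and lim_{n→∞} J_{αⁿ,y_δⁿ}(yⁿ,uⁿ) = min_{(y,u) ∈ F_ad} J_{α,y_δ}(y,u) = J_{α,y_δ}(ȳ,ū) < ∞. -/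
open Filter Topology ENNReal
open scoped RealInnerProductSpace

/-!
The optimal values `J_{αⁿ,yδⁿ}(yⁿ,uⁿ)` are squeezed. From below, `J` is sequentially lower
semicontinuous along weakly convergent arguments and convergent data: the fidelity term because
`‖w‖² + 2⟪v - w, w⟫ ≤ ‖v‖²` with `⟪vₙ - w, w⟫ → 0` when `vₙ ⇀ w`, the regularisers by (H6).
From above, optimality of `(yⁿ,uⁿ)` gives `J_{αⁿ,yδⁿ}(yⁿ,uⁿ) ≤ J_{αⁿ,yδⁿ}(q)` for every feasible
`q`, and the right side tends to `J_{α,yδ}(q)`; this needs `α > 0` where `Ψᵢ(q) = ∞`.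
Hence `J_{α,yδ}(p) ≤ liminf ≤ limsup ≤ J_{α,yδ}(q)` for all feasible `q`, including `q = p`.
-/

namespace ENNReal

variable {ι : Type*} {l : Filter ι}

lemma liminf_add_liminf_le (u v : ι → ℝ≥0∞) :
    liminf u l + liminf v l ≤ liminf (fun n => u n + v n) l := by
  simp only [liminf_eq_iSup_iInf]
  refine biSup_add_biSup_le' ⟨_, univ_mem⟩ ⟨_, univ_mem⟩ fun s hs t ht => ?_
  refine le_iSup₂_of_le (s ∩ t) (inter_mem hs ht) (le_iInf₂ fun a ha => ?_)
  exact add_le_add (iInf₂_le a ha.1) (iInf₂_le a ha.2)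

lemma sum_liminf_le_liminf_sum {κ : Type*} (s : Finset κ) (u : κ → ι → ℝ≥0∞) :
    ∑ k ∈ s, liminf (u k) l ≤ liminf (fun n => ∑ k ∈ s, u k n) l := by
  classical
  induction s using Finset.induction_on with
  | empty => simp
  | insert a s ha ih =>
    simp only [Finset.sum_insert ha]
    exact (add_le_add le_rfl ih).trans (liminf_add_liminf_le _ _)

lemma mul_le_liminf_mul_of_tendsto [l.NeBot] {a x : ι → ℝ≥0∞} {a₀ x₀ : ℝ≥0∞}
    (ha : Tendsto a l (𝓝 a₀)) (hx : x₀ ≤ liminf x l) :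
    a₀ * x₀ ≤ liminf (fun n => a n * x n) l :=
  calc a₀ * x₀ ≤ liminf a l * liminf x l := by rw [ha.liminf_eq]; gcongr
    _ ≤ liminf (fun n => a n * x n) l := le_liminf_mul

lemma ofReal_le_liminf_of_tendsto_of_le [l.NeBot] {g h : ι → ℝ} {b : ℝ}
    (hg : Tendsto g l (𝓝 b)) (hgh : ∀ n, g n ≤ h n) :
    ENNReal.ofReal b ≤ liminf (fun n => ENNReal.ofReal (h n)) l :=
  calc ENNReal.ofReal b = liminf (fun n => ENNReal.ofReal (g n)) l :=
        (ENNReal.tendsto_ofReal hg).liminf_eq.symm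
    _ ≤ liminf (fun n => ENNReal.ofReal (h n)) l :=
        liminf_le_liminf (Eventually.of_forall fun n => ofReal_le_ofReal (hgh n))

end ENNReal

theorem isMinOn_and_tendsto_of_le_liminf {ι X α : Type*} [CompleteLinearOrder α]
    [TopologicalSpace α] [OrderTopology α] {l : Filter ι} [l.NeBot]
    {F : ι → X → α} {G : X → α} {s : Set X} {x : ι → X} {x₀ : X}
    (hmin : ∀ n, IsMinOn (F n) s (x n)) (hx₀ : x₀ ∈ s)
    (hlower : G x₀ ≤ liminf (fun n => F n (x n)) l)
    (hpointwise : ∀ q ∈ s, Tendsto (fun n => F n q) l (𝓝 (G q))) :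
    IsMinOn G s x₀ ∧ Tendsto (fun n => F n (x n)) l (𝓝 (G x₀)) := by
  have hupper : ∀ q ∈ s, limsup (fun n => F n (x n)) l ≤ G q := fun q hq =>
    (hpointwise q hq).limsup_eq ▸ limsup_le_limsup (Eventually.of_forall fun n => hmin n hq)
  exact ⟨fun q hq => hlower.trans (le_trans liminf_le_limsup (hupper q hq)),
    tendsto_of_le_liminf_of_limsup_le hlower (hupper x₀ hx₀)⟩

lemma sq_norm_add_two_inner_sub_le {H : Type*} [NormedAddCommGroup H] [InnerProductSpace ℝ H]
    (v w : H) : ‖w‖ ^ 2 + 2 * ⟪v - w, w⟫ ≤ ‖v‖ ^ 2 := by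
  have h := norm_add_sq_real (v - w) w
  rw [sub_add_cancel] at h
  nlinarith [sq_nonneg ‖v - w‖]

namespace WeakConv

section Normed

variable {X X' : Type*} [NormedAddCommGroup X] [NormedSpace ℝ X]
  [NormedAddCommGroup X'] [NormedSpace ℝ X'] {x : ℕ → X} {x₀ : X}

lemma map (hx : WeakConv x x₀) (T : X →L[ℝ] X') : WeakConv (fun n => T (x n)) (T x₀) :=
  fun f => hx (f.comp T)

lemma sub_tendsto (hx : WeakConv x x₀) {z : ℕ → X} {z₀ : X} (hz : Tendsto z atTop (𝓝 z₀)) :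
    WeakConv (fun n => x n - z n) (x₀ - z₀) := fun f => by
  simpa only [map_sub, Function.comp_apply] using (hx f).sub ((f.continuous.tendsto z₀).comp hz)

end Normed

variable {H : Type*} [NormedAddCommGroup H] [InnerProductSpace ℝ H]

lemma tendsto_inner_sub {x : ℕ → H} {x₀ : H} (hx : WeakConv x x₀) (v : H) :
    Tendsto (fun n => ⟪x n - x₀, v⟫) atTop (𝓝 0) := by
  have h := (hx (innerSL ℝ v)).sub_const ⟪v, x₀⟫
  simpa only [innerSL_apply_apply, sub_self, ← inner_sub_right, real_inner_comm v] using h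

lemma ofReal_mul_sum_sq_norm_le_liminf {κ : Type*} (s : Finset κ) {c : ℝ} (hc : 0 ≤ c)
    {x : κ → ℕ → H} {x₀ : κ → H} (hx : ∀ k, WeakConv (x k) (x₀ k)) :
    ENNReal.ofReal (c * ∑ k ∈ s, ‖x₀ k‖ ^ 2)
      ≤ liminf (fun n => ENNReal.ofReal (c * ∑ k ∈ s, ‖x k n‖ ^ 2)) atTop := by
  refine ENNReal.ofReal_le_liminf_of_tendsto_of_le
    (g := fun n => c * ∑ k ∈ s, (‖x₀ k‖ ^ 2 + 2 * ⟪x k n - x₀ k, x₀ k⟫)) ?_ fun n => ?_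
  · have h := (tendsto_finsetSum s fun k _ =>
      (((hx k).tendsto_inner_sub (x₀ k)).const_mul 2).const_add (‖x₀ k‖ ^ 2)).const_mul c
    simpa only [mul_zero, add_zero] using h
  · exact mul_le_mul_of_nonneg_left
      (Finset.sum_le_sum fun k _ => sq_norm_add_two_inner_sub_le _ _) hc

end WeakConv

section Tikhonov

variable {Y U Ytil : Type*} [NormedAddCommGroup Y] [NormedSpace ℝ Y]
  [NormedAddCommGroup U] [NormedSpace ℝ U] [NormedAddCommGroup Ytil] [InnerProductSpace ℝ Ytil]
  {m r : ℕ} (ιY : Y →L[ℝ] Ytil) (Ψ : Fin r → U → ℝ≥0∞)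

lemma tendsto_Jfun {ι : Type*} {l : Filter ι} {β : ι → Fin r → ℝ} {β₀ : Fin r → ℝ}
    (hβ₀ : ∀ i, 0 < β₀ i) (hβ : ∀ i, Tendsto (fun n => β n i) l (𝓝 (β₀ i)))
    {d : ι → Fin m → Ytil} {d₀ : Fin m → Ytil} (hd : ∀ j, Tendsto (fun n => d n j) l (𝓝 (d₀ j)))
    (q : Y × U) :
    Tendsto (fun n => Jfun ιY Ψ (β n) (d n) q) l (𝓝 (Jfun ιY Ψ β₀ d₀ q)) := by
  refine (ENNReal.tendsto_ofReal ?_).add (tendsto_finsetSum _ fun i _ => ?_)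
  · exact tendsto_const_nhds.mul
      (tendsto_finsetSum _ fun j _ => ((tendsto_const_nhds.sub (hd j)).norm).pow 2)
  · exact ENNReal.Tendsto.mul_const (ENNReal.tendsto_ofReal (hβ i))
      (Or.inl (ENNReal.ofReal_pos.2 (hβ₀ i)).ne')

lemma Jfun_le_liminf {β : ℕ → Fin r → ℝ} {β₀ : Fin r → ℝ}
    (hβ : ∀ i, Tendsto (fun n => β n i) atTop (𝓝 (β₀ i)))
    {d : ℕ → Fin m → Ytil} {d₀ : Fin m → Ytil}
    (hd : ∀ j, Tendsto (fun n => d n j) atTop (𝓝 (d₀ j)))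
    {q : ℕ → Y × U} {q₀ : Y × U} (hq : WeakConv q q₀)
    (hΨ : ∀ i, Ψ i q₀.2 ≤ liminf (fun n => Ψ i (q n).2) atTop) :
    Jfun ιY Ψ β₀ d₀ q₀ ≤ liminf (fun n => Jfun ιY Ψ (β n) (d n) (q n)) atTop := by
  have hfidelity := WeakConv.ofReal_mul_sum_sq_norm_le_liminf Finset.univ
    (c := 1 / (2 * (m : ℝ))) (by positivity)
    fun j => ((hq.map (ContinuousLinearMap.fst ℝ Y U)).map ιY).sub_tendsto (hd j)
  have hregulariser : ∀ i, ENNReal.ofReal (β₀ i) * Ψ i q₀.2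
      ≤ liminf (fun n => ENNReal.ofReal (β n i) * Ψ i (q n).2) atTop := fun i =>
    ENNReal.mul_le_liminf_mul_of_tendsto (ENNReal.tendsto_ofReal (hβ i)) (hΨ i)
  refine (add_le_add hfidelity ?_).trans (ENNReal.liminf_add_liminf_le _ _)
  exact (Finset.sum_le_sum fun i _ => hregulariser i).trans
    (ENNReal.sum_liminf_le_liminf_sum _ _)

lemma Jfun_ne_top (β : Fin r → ℝ) (d : Fin m → Ytil) {q : Y × U} (hq : ∑ i, Ψ i q.2 ≠ ⊤) :
    Jfun ιY Ψ β d q ≠ ⊤ := by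
  have hΨ : ∀ i, Ψ i q.2 ≠ ⊤ := fun i =>
    ne_top_of_le_ne_top hq
      (Finset.single_le_sum (f := fun i => Ψ i q.2) (fun i _ => zero_le) (Finset.mem_univ i))
  exact ENNReal.add_ne_top.2 ⟨ENNReal.ofReal_ne_top,
    ENNReal.sum_ne_top.2 fun i _ => ENNReal.mul_ne_top ENNReal.ofReal_ne_top (hΨ i)⟩

end Tikhonov

variable {Y U Util Ytil Z : Type*}
  [NormedAddCommGroup Y] [NormedSpace ℝ Y] [CompleteSpace Y]
  [NormedAddCommGroup U] [NormedSpace ℝ U] [CompleteSpace U]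
  [NormedAddCommGroup Util] [InnerProductSpace ℝ Util] [CompleteSpace Util]
  [NormedAddCommGroup Ytil] [InnerProductSpace ℝ Ytil] [CompleteSpace Ytil]
  [NormedAddCommGroup Z] [NormedSpace ℝ Z] [CompleteSpace Z]

theorem convergence_of_optimal_values_general
    {m r : ℕ}
    (ιY : Y →L[ℝ] Ytil)
    (Uad : Set U) (e : Y → U → Z) (Ψ : Fin r → U → ℝ≥0∞)
    (αlo αhi : Fin r → ℝ) (hαpos : ∀ i, 0 < αlo i)
    (hH5prop : ∃ p ∈ Fad Uad e, ∑ i, Ψ i p.2 ≠ ⊤)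
    (hH6 : ∀ (i : Fin r) (u : ℕ → U) (ubar : U), WeakConv u ubar →
      Ψ i ubar ≤ Filter.liminf (fun n => Ψ i (u n)) atTop)
    (αseq : ℕ → Fin r → ℝ)
    (α : Fin r → ℝ) (hα : ∀ i, αlo i ≤ α i ∧ α i ≤ αhi i)
    (hαconv : ∀ i, Tendsto (fun n => αseq n i) atTop (𝓝 (α i)))
    (yδseq : ℕ → Fin m → Ytil) (yδ : Fin m → Ytil)
    (hyδconv : ∀ j, Tendsto (fun n => yδseq n j) atTop (𝓝 (yδ j)))
    (y : ℕ → Y) (u : ℕ → U)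
    (hsol : ∀ n, Solves Uad e ιY Ψ (αseq n) (yδseq n) (y n, u n))
    (p : Y × U) (hpFad : p ∈ Fad Uad e)
    (hweak : WeakConv (fun n => (y n, u n)) p) :
    Solves Uad e ιY Ψ α yδ p ∧
      Tendsto (fun n => Jfun ιY Ψ (αseq n) (yδseq n) (y n, u n)) atTop
        (𝓝 (Jfun ιY Ψ α yδ p)) ∧
      Jfun ιY Ψ α yδ p ≠ ⊤ := by
  obtain ⟨hmin, htendsto⟩ := isMinOn_and_tendsto_of_le_liminf (fun n => isMinOn_iff.2 (hsol n).2) hpFad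
    (Jfun_le_liminf ιY Ψ hαconv hyδconv hweak fun i =>
      hH6 i u p.2 (hweak.map (ContinuousLinearMap.snd ℝ Y U)))
    fun q _ => tendsto_Jfun ιY Ψ (fun i => (hαpos i).trans_le (hα i).1) hαconv hyδconv q
  obtain ⟨q₀, hq₀, hq₀_finite⟩ := hH5prop
  exact ⟨⟨hpFad, isMinOn_iff.1 hmin⟩, htendsto,
    ne_top_of_le_ne_top (Jfun_ne_top ιY Ψ α yδ hq₀_finite) (isMinOn_iff.1 hmin q₀ hq₀)⟩

/-- Convergence of optimal values (Step 2 in the proof of Lemma 3.1): under (H1)–(H6),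
if `(αⁿ, yδⁿ) → (α, yδ)`, each `(yⁿ,uⁿ)` solves `(P_{αⁿ,yδⁿ})`, and `(yⁿ,uⁿ)` converges
weakly to some `p ∈ F_ad`, then `p` solves `(P_{α,yδ})` and
`J_{αⁿ,yδⁿ}(yⁿ,uⁿ) → J_{α,yδ}(p) = min J_{α,yδ} < ∞`. -/
theorem convergence_of_optimal_values
    (hYrefl : Function.Surjective (NormedSpace.inclusionInDoubleDual ℝ Y))
    (hUrefl : Function.Surjective (NormedSpace.inclusionInDoubleDual ℝ U))
    {m r : ℕ} (hm : 0 < m) (hr : 0 < r)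
    (ιY : Y →L[ℝ] Ytil) (hιY : Function.Injective ιY)
    (Uad : Set U) (e : Y → U → Z) (Ψ : Fin r → U → ℝ≥0∞)
    (αlo αhi : Fin r → ℝ) (hαpos : ∀ i, 0 < αlo i) (hαle : ∀ i, αlo i ≤ αhi i)
    (hH1 : Convex ℝ Uad ∧ IsClosed Uad)
    (hH2 : (Fad Uad e).Nonempty)
    (hH3 : ∀ (y : ℕ → Y) (u : ℕ → U) (ybar : Y) (ubar : U),
      (∀ n, u n ∈ Uad) → ubar ∈ Uad → (∀ n, e (y n) (u n) = 0) →
      WeakConv (fun n => (y n, u n)) (ybar, ubar) → e ybar ubar = 0)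
    (hH4 : ∀ (y : ℕ → Y) (u : ℕ → U), (∀ n, (y n, u n) ∈ Fad Uad e) →
      (∃ C : ℝ, ∀ n, ‖u n‖ ≤ C) → ∃ C : ℝ, ∀ n, ‖y n‖ ≤ C)
    (hH5coer : ∀ u : ℕ → U, Tendsto (fun n => ‖u n‖) atTop atTop →
      Tendsto (fun n => ∑ i, Ψ i (u n)) atTop (𝓝 (⊤ : ℝ≥0∞)))
    (hH5prop : ∃ p ∈ Fad Uad e, ∑ i, Ψ i p.2 ≠ ⊤)
    (hH6 : ∀ (i : Fin r) (u : ℕ → U) (ubar : U), WeakConv u ubar →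
      Ψ i ubar ≤ Filter.liminf (fun n => Ψ i (u n)) atTop)
    (αseq : ℕ → Fin r → ℝ) (hαseq : ∀ n i, αlo i ≤ αseq n i ∧ αseq n i ≤ αhi i)
    (α : Fin r → ℝ) (hα : ∀ i, αlo i ≤ α i ∧ α i ≤ αhi i)
    (hαconv : ∀ i, Tendsto (fun n => αseq n i) atTop (𝓝 (α i)))
    (yδseq : ℕ → Fin m → Ytil) (yδ : Fin m → Ytil)
    (hyδconv : ∀ j, Tendsto (fun n => yδseq n j) atTop (𝓝 (yδ j)))
    (y : ℕ → Y) (u : ℕ → U)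
    (hsol : ∀ n, Solves Uad e ιY Ψ (αseq n) (yδseq n) (y n, u n))
    (p : Y × U) (hpFad : p ∈ Fad Uad e)
    (hweak : WeakConv (fun n => (y n, u n)) p) :
    Solves Uad e ιY Ψ α yδ p ∧
      Tendsto (fun n => Jfun ιY Ψ (αseq n) (yδseq n) (y n, u n)) atTop
        (𝓝 (Jfun ιY Ψ α yδ p)) ∧
      Jfun ιY Ψ α yδ p ≠ ⊤ :=
  convergence_of_optimal_values_general ιY Uad e Ψ αlo αhi hαpos hH5prop hH6 αseq α hα hαconv yδseq
    yδ hyδconv y u hsol p hpFad hweak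
end
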